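/- arXiv:1601.03092 — 4 statements merged into one kernel-verified Lean document; each statement's English description precedes it below -/
import Mathlib

section
/- Let λ be an irrational real number, let ℓ₀ be a positive integer, and let k, c ∈ ℤ be such that |k·λ − c| < ‖ℓ·λ‖ for every integer ℓ with 1 ≤ ℓ ≤ ℓ₀. Then for every integer ℓ with 1 ≤ ℓ ≤ ℓ₀ one has ⌊(k+ℓ)·λ⌋ = c + ⌊ℓ·λ⌋ and ⌊(k−ℓ)·λ⌋ = c − ⌊ℓ·λ⌋ − 1. -/
/-!
Write `ℓλ = ⌊ℓλ⌋ + f` with `0 ≤ f < 1`. The hypothesis at `ℓ` says `ε := kλ − c` satisfies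
`|ε| < min f (1 − f)`, so `f + ε ∈ (0, 1)` and `ε − f ∈ (−1, 0)`; the two floor identities are
just these two inclusions, since `(k ± ℓ)λ = c ± ⌊ℓλ⌋ + (ε ± f)`.
-/

/-- The distance from a real number to the nearest integer. -/
noncomputable def nearestIntDist (x : ℝ) : ℝ := |x - round x|

theorem nearestIntDist_eq_min_fract (x : ℝ) :
    nearestIntDist x = min (Int.fract x) (1 - Int.fract x) :=
  abs_sub_round_eq_min x

theorem abs_lt_fract_of_lt_nearestIntDist {e x : ℝ} (h : |e| < nearestIntDist x) :
    -Int.fract x < e ∧ e < Int.fract x ∧ -(1 - Int.fract x) < e ∧ e < 1 - Int.fract x := by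
  rw [nearestIntDist_eq_min_fract, lt_min_iff, abs_lt, abs_lt] at h
  exact ⟨h.1.1, h.1.2, h.2.1, h.2.2⟩

theorem floor_add_eq_of_abs_sub_lt_nearestIntDist {a x : ℝ} {c : ℤ}
    (h : |a - c| < nearestIntDist x) : ⌊a + x⌋ = c + ⌊x⌋ := by
  obtain ⟨h₁, -, -, h₄⟩ := abs_lt_fract_of_lt_nearestIntDist h
  have hx := Int.floor_add_fract x
  rw [Int.floor_eq_iff]
  push_cast
  constructor <;> linarith

theorem floor_sub_eq_of_abs_sub_lt_nearestIntDist {a x : ℝ} {c : ℤ}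
    (h : |a - c| < nearestIntDist x) : ⌊a - x⌋ = c - ⌊x⌋ - 1 := by
  obtain ⟨-, h₂, h₃, -⟩ := abs_lt_fract_of_lt_nearestIntDist h
  have hx := Int.floor_add_fract x
  rw [Int.floor_eq_iff]
  push_cast
  constructor <;> linarith

theorem floor_recurrence_general (lam : ℝ) (l₀ : ℕ)
    (k c : ℤ)
    (h : ∀ ℓ : ℤ, 1 ≤ ℓ → ℓ ≤ (l₀ : ℤ) → |(k : ℝ) * lam - (c : ℝ)| <
      nearestIntDist ((ℓ : ℝ) * lam)) :
    ∀ ℓ : ℤ, 1 ≤ ℓ → ℓ ≤ (l₀ : ℤ) →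
      ⌊((k + ℓ : ℤ) : ℝ) * lam⌋ = c + ⌊(ℓ : ℝ) * lam⌋ ∧
      ⌊((k - ℓ : ℤ) : ℝ) * lam⌋ = c - ⌊(ℓ : ℝ) * lam⌋ - 1 := by
  intro ℓ h₁ h₂
  have hℓ := h ℓ h₁ h₂
  push_cast [add_mul, sub_mul]
  exact ⟨floor_add_eq_of_abs_sub_lt_nearestIntDist hℓ,
    floor_sub_eq_of_abs_sub_lt_nearestIntDist hℓ⟩

/-- Floor-function recurrence identity for an irrational rotation number: if `|k·λ − c|` is
smaller than `‖ℓ·λ‖` for all integers `1 ≤ ℓ ≤ ℓ₀`, then for all such `ℓ` one has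
`⌊(k+ℓ)λ⌋ = c + ⌊ℓλ⌋` and `⌊(k−ℓ)λ⌋ = c − ⌊ℓλ⌋ − 1`. -/
theorem floor_recurrence (lam : ℝ) (hlam : Irrational lam) (l₀ : ℕ) (hl₀ : 0 < l₀)
    (k c : ℤ)
    (h : ∀ ℓ : ℤ, 1 ≤ ℓ → ℓ ≤ (l₀ : ℤ) → |(k : ℝ) * lam - (c : ℝ)| <
      nearestIntDist ((ℓ : ℝ) * lam)) :
    ∀ ℓ : ℤ, 1 ≤ ℓ → ℓ ≤ (l₀ : ℤ) →
      ⌊((k + ℓ : ℤ) : ℝ) * lam⌋ = c + ⌊(ℓ : ℝ) * lam⌋ ∧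
      ⌊((k - ℓ : ℤ) : ℝ) * lam⌋ = c - ⌊(ℓ : ℝ) * lam⌋ - 1 :=
  floor_recurrence_general lam l₀ k c h
end

section
/- Let r ≥ 1 and m ≥ 0 be integers, let λ_{i,q} ∈ ℝ for 1 ≤ i ≤ r and 1 ≤ q ≤ m, let Δ₁, …, Δ_r ∈ ℝ, and let ε > 0. Then the set of integer vectors (k₁, …, k_r) ∈ ℤ^r satisfying ‖k_i·λ_{i,q}‖ < ε for all i and q, together with |k₁·Δ₁ − k_i·Δ_i| < 1/8 for all i = 2, …, r, is infinite. -/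
/-!
Choose weights `θ i` with `Δ i * θ i` independent of `i` and some `θ j = 1`. Pigeonholing the
multiples of a point in the compact torus `(ℝ/ℤ)^J` shows that for infinitely many `n` all the
numbers `n θ i` and `n θ i λ i q` are within `δ` of an integer. Then `k i = round (n θ i)` works:
`k i λ i q` is close to an integer, and `k i Δ i` is within `δ |Δ i|` of `n Δ i θ i`, which does
not depend on `i`. Since `k j = n`, distinct `n` give distinct `k`.
-/

open Set Metric Filter Topology

theorem infinite_setOf_norm_nsmul_lt {G : Type*} [SeminormedAddCommGroup G] [CompactSpace G]
    (g : G) {δ : ℝ} (hδ : 0 < δ) : {n : ℕ | ‖n • g‖ < δ}.Infinite := by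
  obtain ⟨t, -, ht, hcover⟩ := finite_cover_balls_of_compact (isCompact_univ (X := G)) (half_pos hδ)
  have : Finite t := ht.to_subtype
  have hmem : ∀ n : ℕ, ∃ x : t, n • g ∈ ball (x : G) (δ / 2) := by
    intro n
    simpa using hcover (mem_univ (n • g))
  choose c hc using hmem
  -- Two multiples of `g` in the same ball differ by a short multiple of `g`.
  obtain ⟨x, hx⟩ := Finite.exists_infinite_fiber c
  have hfiber := infinite_coe_iff.mp hx
  obtain ⟨n₀, hn₀⟩ := hfiber.nonempty
  refine ((hfiber.sdiff (finite_Iic n₀)).image (f := (· - n₀)) ?_).mono ?_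
  · rintro a ⟨-, ha⟩ b ⟨-, hb⟩ hab
    simp only [mem_Iic, not_le] at ha hb hab
    omega
  · rintro _ ⟨n, ⟨hn, hn_gt⟩, rfl⟩
    simp only [mem_Iic, not_le] at hn_gt
    simp only [mem_preimage, mem_singleton_iff] at hn hn₀
    have h₁ := mem_ball.mp (hc n)
    have h₂ := mem_ball.mp (hc n₀)
    rw [hn] at h₁
    rw [hn₀] at h₂
    calc ‖(n - n₀) • g‖ = dist (n • g) (n₀ • g) := by
          rw [sub_nsmul _ hn_gt.le, dist_eq_norm, sub_eq_add_neg]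
      _ ≤ dist (n • g) x + dist (n₀ • g) x := dist_triangle_right _ _ _
      _ < δ := by linarith

theorem nearestIntDist_eq_norm (x : ℝ) : nearestIntDist x = ‖(x : UnitAddCircle)‖ :=
  UnitAddCircle.norm_eq.symm

theorem infinite_setOf_forall_nearestIntDist_nat_mul_lt {J : Type*} [Fintype J] (x : J → ℝ)
    {δ : ℝ} (hδ : 0 < δ) : {n : ℕ | ∀ j, nearestIntDist (n * x j) < δ}.Infinite := by
  convert infinite_setOf_norm_nsmul_lt (fun j => (x j : UnitAddCircle)) hδ using 3 with n
  simp only [pi_norm_lt_iff hδ, Pi.smul_apply, ← AddCircle.coe_nsmul, nsmul_eq_mul,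
    nearestIntDist_eq_norm]

theorem nearestIntDist_add_le (x y : ℝ) : nearestIntDist (x + y) ≤ nearestIntDist x + |y| :=
  calc |x + y - round (x + y)| ≤ |x + y - round x| := round_le _ _
    _ ≤ |x - round x| + |y| := by
      rw [add_sub_right_comm]
      exact abs_add_le _ _

theorem nearestIntDist_round_mul_le (t μ : ℝ) :
    nearestIntDist (round t * μ) ≤ nearestIntDist (t * μ) + nearestIntDist t * |μ| :=
  calc nearestIntDist (round t * μ) = nearestIntDist (t * μ + (round t - t) * μ) := by ring_nf
    _ ≤ nearestIntDist (t * μ) + |(round t - t) * μ| := nearestIntDist_add_le _ _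
    _ = nearestIntDist (t * μ) + nearestIntDist t * |μ| := by
      rw [abs_mul, abs_sub_comm]
      rfl

theorem abs_round_mul_sub_round_mul_le {t a b α β : ℝ} (h : α * a = β * b) :
    |round (t * a) * α - round (t * b) * β| ≤
      nearestIntDist (t * a) * |α| + nearestIntDist (t * b) * |β| := by
  have : round (t * a) * α - round (t * b) * β =
      (t * b - round (t * b)) * β - (t * a - round (t * a)) * α := by
    linear_combination t * h
  rw [this, nearestIntDist, nearestIntDist, ← abs_mul, ← abs_mul, add_comm]
  exact abs_sub _ _

theorem exists_eq_one_and_forall_mul_eq_mul {ι : Type*} [Nonempty ι] (Δ : ι → ℝ) :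
    ∃ θ : ι → ℝ, (∃ j, θ j = 1) ∧ ∀ i k, Δ i * θ i = Δ k * θ k := by
  by_cases h : ∀ i, Δ i ≠ 0
  · obtain ⟨j⟩ := ‹Nonempty ι›
    refine ⟨fun i => Δ j / Δ i, ⟨j, div_self (h j)⟩, fun i k => ?_⟩
    simp only [mul_div_cancel₀ _ (h _)]
  · classical
    obtain ⟨j, hj⟩ := not_forall_not.mp h
    have hzero : ∀ i, Δ i * (Pi.single j 1 : ι → ℝ) i = 0 := fun i => by
      rcases eq_or_ne i j with rfl | hi
      · simp [hj]
      · simp [hi]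
    exact ⟨Pi.single j 1, ⟨j, Pi.single_eq_same j 1⟩, fun i k => by rw [hzero, hzero]⟩

theorem exists_pos_forall_mul_lt {ι : Type*} [Finite ι] (a b : ι → ℝ) (hb : ∀ i, 0 < b i) :
    ∃ δ > 0, ∀ i, δ * a i < b i := by
  have hsmall : ∀ᶠ δ in 𝓝 (0 : ℝ), ∀ i, δ * a i < b i :=
    eventually_all.2 fun i => (continuous_id.mul continuous_const).continuousAt.eventually_lt
      continuousAt_const (by simpa using hb i)
  obtain ⟨δ, hδ, hpos⟩ :=
    ((hsmall.filter_mono nhdsWithin_le_nhds).and (self_mem_nhdsWithin (s := Ioi 0))).exists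
  exact ⟨δ, hpos, hδ⟩

/-- There are infinitely many integer vectors `(k 1, …, k r)` satisfying the system of
Diophantine inequalities `‖k i · λ i q‖ < ε` for all `i, q` and
`|k 1 · Δ 1 − k i · Δ i| < 1/8` for all `i`. -/
theorem minkowski_system_infinite (r m : ℕ) (hr : 0 < r)
    (lam : Fin r → Fin m → ℝ) (Δ : Fin r → ℝ) (ε : ℝ) (hε : 0 < ε) :
    {k : Fin r → ℤ |
      (∀ i : Fin r, ∀ q : Fin m, nearestIntDist ((k i : ℝ) * lam i q) < ε) ∧
      (∀ i : Fin r, |(k ⟨0, hr⟩ : ℝ) * Δ ⟨0, hr⟩ - (k i : ℝ) * Δ i| < 1 / 8)}.Infinite := by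
  set z : Fin r := ⟨0, hr⟩
  have : Nonempty (Fin r) := ⟨z⟩
  obtain ⟨θ, ⟨j, hθj⟩, hθ⟩ := exists_eq_one_and_forall_mul_eq_mul Δ
  obtain ⟨δ, hδ, hδ_bound⟩ := exists_pos_forall_mul_lt
    (Sum.elim (fun p : Fin r × Fin m => 1 + |lam p.1 p.2|) (fun i => |Δ z| + |Δ i|))
    (Sum.elim (fun _ => ε) (fun _ => 1 / 8)) (by rintro (_ | _) <;> simp [hε])
  have hS := infinite_setOf_forall_nearestIntDist_nat_mul_lt
    (Sum.elim θ (fun p : Fin r × Fin m => θ p.1 * lam p.1 p.2)) hδ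
  have hinj : Function.Injective fun (n : ℕ) (i : Fin r) => round (n * θ i) := fun a b hab => by
    simpa [hθj] using congrFun hab j
  refine (hS.image hinj.injOn).mono ?_
  rintro _ ⟨n, hn, rfl⟩
  refine ⟨fun i q => ?_, fun i => ?_⟩
  · have h₁ := hn (.inr (i, q))
    have h₂ := hn (.inl i)
    simp only [Sum.elim_inl, Sum.elim_inr, ← mul_assoc] at h₁ h₂
    calc nearestIntDist (round (n * θ i) * lam i q)
        ≤ nearestIntDist (n * θ i * lam i q) + nearestIntDist (n * θ i) * |lam i q| :=
          nearestIntDist_round_mul_le _ _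
      _ < δ + δ * |lam i q| := add_lt_add_of_lt_of_le h₁ (by gcongr)
      _ < ε := by simpa [mul_add] using hδ_bound (.inl (i, q))
  · calc |round (n * θ z) * Δ z - round (n * θ i) * Δ i|
        ≤ nearestIntDist (n * θ z) * |Δ z| + nearestIntDist (n * θ i) * |Δ i| :=
          abs_round_mul_sub_round_mul_le (by rw [mul_comm, hθ, mul_comm])
      _ ≤ δ * |Δ z| + δ * |Δ i| := by
          gcongr
          exacts [(hn (.inl z)).le, (hn (.inl i)).le]
      _ < 1 / 8 := by simpa [mul_add] using hδ_bound (.inr i)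
end

section
/- Let E be a finite-dimensional real inner product space, let k ∈ ℕ, let E = E₀ ⊇ E₁ ⊇ … ⊇ E_k be a decreasing chain of linear subspaces, and for each r with 0 ≤ r < k let ∂_r : E → E be a linear map such that: ∂_r(E_r) ⊆ E_r; ∂_r vanishes on the orthogonal complement of E_r; ∂_r ∘ ∂_r = 0; and E_{r+1} is the orthogonal complement of ∂_r(E_r) inside ker ∂_r ∩ E_r. Then the linear map D := ∂₀ + ∂₁ + … + ∂_{k−1} satisfies D ∘ D = 0, its range is the (internal, pairwise orthogonal) direct sum of the subspaces ∂_r(E_r) for 0 ≤ r < k, and its kernel is the orthogonal direct sum of the range of D and E_k. In particular, the quotient ker D / range D is isomorphic as a vector space to E_k. -/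
open scoped RealInnerProductSpace

/-!
Each `∂ r` maps `E r` into the part of `E r` orthogonal to `E (r+1)` and kills everything
outside `E r`, so all composites `∂ r ∘ ∂ s` vanish and the ranges of the `∂ r` are pairwise
orthogonal. Hence `D x = 0` iff every `∂ r x = 0`, and a preimage of `∂ r y` in `(ker ∂ r)ᗮ`
is killed by every other `∂ s`, so `range D = ⨆ range ∂ r`. Finally
`ker ∂ r ⊓ E r = range ∂ r ⊔ E (r+1)`, and peeling off one page at a time gives
`ker D = range D ⊔ E k`, an orthogonal sum.
-/

open Submodule LinearMap

namespace Submodule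

variable {R M : Type*} [Ring R] [AddCommGroup M] [Module R M]

noncomputable def quotientComapEquivOfEqSup {K P Q : Submodule R M} (h : P ⊔ Q = K)
    (hPQ : Disjoint P Q) : (K ⧸ P.comap K.subtype) ≃ₗ[R] Q :=
  have hcompl : IsCompl (P.comap K.subtype) (Q.comap K.subtype) := by
    subst h
    simp only [(P ⊔ Q).mapIic.isCompl_iff, Set.Iic.isCompl_iff, coe_mapIic_apply,
      map_comap_subtype, le_sup_left, le_sup_right, inf_of_le_right, hPQ, and_self]
  (quotientEquivOfIsCompl _ _ hcompl).trans (comapSubtypeEquivOfLe (h ▸ le_sup_right))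

end Submodule

namespace LinearMap

theorem ker_sum_eq_iInf_ker_of_iSupIndep {R M N ι : Type*} [Ring R] [AddCommGroup M]
    [Module R M] [AddCommGroup N] [Module R N] [Fintype ι] {f : ι → M →ₗ[R] N}
    (hf : iSupIndep fun i => range (f i)) : ker (∑ i, f i) = ⨅ i, ker (f i) := by
  ext x
  simp only [mem_ker, LinearMap.coe_sum, Finset.sum_apply, mem_iInf]
  refine ⟨fun hx i => (iSupIndep_iff_finsetSum_eq_zero_imp_eq_zero _).1 hf Finset.univ
    (fun i => f i x) (fun i _ => mem_range_self (f i) x) hx i (Finset.mem_univ i), fun hx => ?_⟩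
  exact Finset.sum_eq_zero fun i _ => hx i

variable {𝕜 E F : Type*} [RCLike 𝕜] [NormedAddCommGroup E] [InnerProductSpace 𝕜 E]
  [AddCommGroup F] [Module 𝕜 F]

theorem map_eq_range_of_orthogonal_le_ker (f : E →ₗ[𝕜] F) {K : Submodule 𝕜 E}
    [K.HasOrthogonalProjection] (h : Kᗮ ≤ ker f) : K.map f = range f := by
  refine le_antisymm map_le_range ?_
  rintro _ ⟨x, rfl⟩
  obtain ⟨p, hp, q, hq, rfl⟩ := K.exists_add_mem_mem_orthogonal x
  exact ⟨p, hp, by rw [map_add, mem_ker.1 (h hq), add_zero]⟩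

end LinearMap

namespace SpectralChain

variable {𝕜 E : Type*} [RCLike 𝕜] [NormedAddCommGroup E] [InnerProductSpace 𝕜 E] {k : ℕ}
  {Esub : Fin (k + 1) → Submodule 𝕜 E} {del : Fin k → E →ₗ[𝕜] E}

theorem Esub_succ_le_ker
    (hnext : ∀ r : Fin k, Esub r.succ =
      (ker (del r) ⊓ Esub r.castSucc) ⊓ (Submodule.map (del r) (Esub r.castSucc))ᗮ)
    (r : Fin k) : Esub r.succ ≤ ker (del r) :=
  (hnext r).le.trans (inf_le_left.trans inf_le_left)

variable [FiniteDimensional 𝕜 E]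

theorem map_Esub_eq_range (hvanish : ∀ r : Fin k, ∀ x ∈ (Esub r.castSucc)ᗮ, del r x = 0)
    (r : Fin k) : (Esub r.castSucc).map (del r) = range (del r) :=
  map_eq_range_of_orthogonal_le_ker _ (hvanish r)

theorem range_le_Esub
    (hmap : ∀ r : Fin k, Submodule.map (del r) (Esub r.castSucc) ≤ Esub r.castSucc)
    (hvanish : ∀ r : Fin k, ∀ x ∈ (Esub r.castSucc)ᗮ, del r x = 0) (r : Fin k) :
    range (del r) ≤ Esub r.castSucc :=
  map_Esub_eq_range hvanish r ▸ hmap r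

theorem Esub_succ_isOrtho_range
    (hvanish : ∀ r : Fin k, ∀ x ∈ (Esub r.castSucc)ᗮ, del r x = 0)
    (hnext : ∀ r : Fin k, Esub r.succ =
      (ker (del r) ⊓ Esub r.castSucc) ⊓ (Submodule.map (del r) (Esub r.castSucc))ᗮ)
    (r : Fin k) : Esub r.succ ⟂ range (del r) :=
  map_Esub_eq_range hvanish r ▸ (hnext r).le.trans inf_le_right

theorem range_isOrtho_range_of_lt (hchain : Antitone Esub)
    (hmap : ∀ r : Fin k, Submodule.map (del r) (Esub r.castSucc) ≤ Esub r.castSucc)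
    (hvanish : ∀ r : Fin k, ∀ x ∈ (Esub r.castSucc)ᗮ, del r x = 0)
    (hnext : ∀ r : Fin k, Esub r.succ =
      (ker (del r) ⊓ Esub r.castSucc) ⊓ (Submodule.map (del r) (Esub r.castSucc))ᗮ)
    {r s : Fin k} (hrs : r < s) : range (del s) ⟂ range (del r) :=
  (range_le_Esub hmap hvanish s).trans (hchain (Fin.succ_le_castSucc_iff.2 hrs))
    |>.trans (Esub_succ_isOrtho_range hvanish hnext r)

theorem pairwise_isOrtho_range (hchain : Antitone Esub)
    (hmap : ∀ r : Fin k, Submodule.map (del r) (Esub r.castSucc) ≤ Esub r.castSucc)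
    (hvanish : ∀ r : Fin k, ∀ x ∈ (Esub r.castSucc)ᗮ, del r x = 0)
    (hnext : ∀ r : Fin k, Esub r.succ =
      (ker (del r) ⊓ Esub r.castSucc) ⊓ (Submodule.map (del r) (Esub r.castSucc))ᗮ) :
    Pairwise fun r s => range (del r) ⟂ range (del s) := by
  intro r s hrs
  rcases hrs.lt_or_gt with h | h
  · exact (range_isOrtho_range_of_lt hchain hmap hvanish hnext h).symm
  · exact range_isOrtho_range_of_lt hchain hmap hvanish hnext h

theorem range_le_ker (hchain : Antitone Esub)
    (hmap : ∀ r : Fin k, Submodule.map (del r) (Esub r.castSucc) ≤ Esub r.castSucc)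
    (hvanish : ∀ r : Fin k, ∀ x ∈ (Esub r.castSucc)ᗮ, del r x = 0)
    (hsq : ∀ r : Fin k, (del r) ∘ₗ (del r) = 0)
    (hnext : ∀ r : Fin k, Esub r.succ =
      (ker (del r) ⊓ Esub r.castSucc) ⊓ (Submodule.map (del r) (Esub r.castSucc))ᗮ)
    (r s : Fin k) : range (del s) ≤ ker (del r) := by
  rcases lt_trichotomy r s with h | rfl | h
  · exact (range_le_Esub hmap hvanish s).trans (hchain (Fin.succ_le_castSucc_iff.2 h))
      |>.trans (Esub_succ_le_ker hnext r)
  · exact range_le_ker_iff.2 (hsq r)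
  · have hEr : Esub r.castSucc ⟂ range (del s) :=
      (hchain (Fin.succ_le_castSucc_iff.2 h)).trans (Esub_succ_isOrtho_range hvanish hnext s)
    exact hEr.symm.trans (hvanish r)

theorem orthogonal_ker_le_ker (hchain : Antitone Esub)
    (hvanish : ∀ r : Fin k, ∀ x ∈ (Esub r.castSucc)ᗮ, del r x = 0)
    (hnext : ∀ r : Fin k, Esub r.succ =
      (ker (del r) ⊓ Esub r.castSucc) ⊓ (Submodule.map (del r) (Esub r.castSucc))ᗮ)
    {r s : Fin k} (hrs : r ≠ s) : (ker (del r))ᗮ ≤ ker (del s) := by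
  rcases hrs.lt_or_gt with h | h
  · have hker : Esub s.castSucc ≤ ker (del r) :=
      (hchain (Fin.succ_le_castSucc_iff.2 h)).trans (Esub_succ_le_ker hnext r)
    exact (orthogonal_le hker).trans (hvanish s)
  · have hEr : (ker (del r))ᗮ ≤ Esub r.castSucc := by
      have hperp : (Esub r.castSucc)ᗮ ≤ ker (del r) := hvanish r
      simpa only [orthogonal_orthogonal] using orthogonal_le hperp
    exact hEr.trans ((hchain (Fin.succ_le_castSucc_iff.2 h)).trans (Esub_succ_le_ker hnext s))

theorem range_le_range_sum (hchain : Antitone Esub)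
    (hvanish : ∀ r : Fin k, ∀ x ∈ (Esub r.castSucc)ᗮ, del r x = 0)
    (hnext : ∀ r : Fin k, Esub r.succ =
      (ker (del r) ⊓ Esub r.castSucc) ⊓ (Submodule.map (del r) (Esub r.castSucc))ᗮ)
    (r : Fin k) : range (del r) ≤ range (∑ s, del s) := by
  rintro _ ⟨x, rfl⟩
  obtain ⟨a, ha, b, hb, rfl⟩ := (ker (del r)).exists_add_mem_mem_orthogonal x
  refine ⟨b, ?_⟩
  rw [LinearMap.coe_sum, Finset.sum_apply, Finset.sum_eq_single r
    (fun s _ hsr => orthogonal_ker_le_ker hchain hvanish hnext (Ne.symm hsr) hb)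
    (fun hr => absurd (Finset.mem_univ r) hr), map_add, mem_ker.1 ha, zero_add]

theorem range_sum_eq_iSup_range (hchain : Antitone Esub)
    (hvanish : ∀ r : Fin k, ∀ x ∈ (Esub r.castSucc)ᗮ, del r x = 0)
    (hnext : ∀ r : Fin k, Esub r.succ =
      (ker (del r) ⊓ Esub r.castSucc) ⊓ (Submodule.map (del r) (Esub r.castSucc))ᗮ) :
    range (∑ r, del r) = ⨆ r, range (del r) := by
  refine le_antisymm ?_ (iSup_le (range_le_range_sum hchain hvanish hnext))
  rintro _ ⟨x, rfl⟩
  rw [LinearMap.coe_sum, Finset.sum_apply]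
  exact sum_mem fun r _ => mem_iSup_of_mem r (mem_range_self (del r) x)

theorem ker_sum_eq_iInf_ker (hchain : Antitone Esub)
    (hmap : ∀ r : Fin k, Submodule.map (del r) (Esub r.castSucc) ≤ Esub r.castSucc)
    (hvanish : ∀ r : Fin k, ∀ x ∈ (Esub r.castSucc)ᗮ, del r x = 0)
    (hnext : ∀ r : Fin k, Esub r.succ =
      (ker (del r) ⊓ Esub r.castSucc) ⊓ (Submodule.map (del r) (Esub r.castSucc))ᗮ) :
    ker (∑ r, del r) = ⨅ r, ker (del r) :=
  ker_sum_eq_iInf_ker_of_iSupIndep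
    (OrthogonalFamily.of_pairwise (pairwise_isOrtho_range hchain hmap hvanish hnext)).independent

theorem Esub_last_le_ker_sum (hchain : Antitone Esub)
    (hmap : ∀ r : Fin k, Submodule.map (del r) (Esub r.castSucc) ≤ Esub r.castSucc)
    (hvanish : ∀ r : Fin k, ∀ x ∈ (Esub r.castSucc)ᗮ, del r x = 0)
    (hnext : ∀ r : Fin k, Esub r.succ =
      (ker (del r) ⊓ Esub r.castSucc) ⊓ (Submodule.map (del r) (Esub r.castSucc))ᗮ) :
    Esub (Fin.last k) ≤ ker (∑ r, del r) := by
  rw [ker_sum_eq_iInf_ker hchain hmap hvanish hnext]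
  exact le_iInf fun r => (hchain (Fin.le_last r.succ)).trans (Esub_succ_le_ker hnext r)

theorem comp_sum_eq_zero (hchain : Antitone Esub)
    (hmap : ∀ r : Fin k, Submodule.map (del r) (Esub r.castSucc) ≤ Esub r.castSucc)
    (hvanish : ∀ r : Fin k, ∀ x ∈ (Esub r.castSucc)ᗮ, del r x = 0)
    (hsq : ∀ r : Fin k, (del r) ∘ₗ (del r) = 0)
    (hnext : ∀ r : Fin k, Esub r.succ =
      (ker (del r) ⊓ Esub r.castSucc) ⊓ (Submodule.map (del r) (Esub r.castSucc))ᗮ)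
    (r : Fin k) : del r ∘ₗ ∑ s, del s = 0 := by
  rw [← range_le_ker_iff, range_sum_eq_iSup_range hchain hvanish hnext]
  exact iSup_le (range_le_ker hchain hmap hvanish hsq hnext r)

theorem sum_comp_sum_eq_zero (hchain : Antitone Esub)
    (hmap : ∀ r : Fin k, Submodule.map (del r) (Esub r.castSucc) ≤ Esub r.castSucc)
    (hvanish : ∀ r : Fin k, ∀ x ∈ (Esub r.castSucc)ᗮ, del r x = 0)
    (hsq : ∀ r : Fin k, (del r) ∘ₗ (del r) = 0)
    (hnext : ∀ r : Fin k, Esub r.succ =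
      (ker (del r) ⊓ Esub r.castSucc) ⊓ (Submodule.map (del r) (Esub r.castSucc))ᗮ) :
    (∑ r, del r) ∘ₗ (∑ r, del r) = 0 := by
  ext x
  exact (LinearMap.sum_apply _ _ _).trans <| Finset.sum_eq_zero fun r _ =>
    LinearMap.congr_fun (comp_sum_eq_zero hchain hmap hvanish hsq hnext r) x

theorem ker_inf_Esub_eq_range_sup_Esub_succ
    (hmap : ∀ r : Fin k, Submodule.map (del r) (Esub r.castSucc) ≤ Esub r.castSucc)
    (hvanish : ∀ r : Fin k, ∀ x ∈ (Esub r.castSucc)ᗮ, del r x = 0)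
    (hsq : ∀ r : Fin k, (del r) ∘ₗ (del r) = 0)
    (hnext : ∀ r : Fin k, Esub r.succ =
      (ker (del r) ⊓ Esub r.castSucc) ⊓ (Submodule.map (del r) (Esub r.castSucc))ᗮ)
    (r : Fin k) : ker (del r) ⊓ Esub r.castSucc = range (del r) ⊔ Esub r.succ := by
  have hle : range (del r) ≤ ker (del r) ⊓ Esub r.castSucc :=
    le_inf (range_le_ker_iff.2 (hsq r)) (range_le_Esub hmap hvanish r)
  rw [hnext r, map_Esub_eq_range hvanish r, inf_comm _ (range (del r))ᗮ,
    sup_orthogonal_inf_of_hasOrthogonalProjection hle]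

theorem ker_sum_le_range_sup_Esub (htop : Esub 0 = ⊤) (hchain : Antitone Esub)
    (hmap : ∀ r : Fin k, Submodule.map (del r) (Esub r.castSucc) ≤ Esub r.castSucc)
    (hvanish : ∀ r : Fin k, ∀ x ∈ (Esub r.castSucc)ᗮ, del r x = 0)
    (hsq : ∀ r : Fin k, (del r) ∘ₗ (del r) = 0)
    (hnext : ∀ r : Fin k, Esub r.succ =
      (ker (del r) ⊓ Esub r.castSucc) ⊓ (Submodule.map (del r) (Esub r.castSucc))ᗮ)
    (j : Fin (k + 1)) : ker (∑ r, del r) ≤ range (∑ r, del r) ⊔ Esub j := by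
  induction j using Fin.induction with
  | zero => simp [htop]
  | succ r ih =>
    set B := range (∑ s, del s)
    have hker : ker (∑ s, del s) ≤ ker (del r) :=
      (ker_sum_eq_iInf_ker hchain hmap hvanish hnext).le.trans (iInf_le _ r)
    have hB : B ≤ ker (del r) :=
      range_le_ker_iff.2 (comp_sum_eq_zero hchain hmap hvanish hsq hnext r)
    calc ker (∑ s, del s) ≤ (B ⊔ Esub r.castSucc) ⊓ ker (del r) := le_inf ih hker
      _ = B ⊔ (range (del r) ⊔ Esub r.succ) := by
        rw [sup_inf_assoc_of_le _ hB, inf_comm,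
          ker_inf_Esub_eq_range_sup_Esub_succ hmap hvanish hsq hnext]
      _ ≤ B ⊔ Esub r.succ :=
        sup_le le_sup_left (sup_le_sup_right (range_le_range_sum hchain hvanish hnext r) _)

end SpectralChain

open SpectralChain

/-- Reassembling a finite chain of differentials on a finite-dimensional real inner product
space into a single complex: given a decreasing chain `E = E₀ ⊇ E₁ ⊇ … ⊇ E_k` and maps
`∂ r` preserving `E r`, vanishing on `(E r)ᗮ`, squaring to zero, and with `E (r+1)` the
orthogonal complement of `∂ r (E r)` inside `ker (∂ r) ⊓ E r`, the map `D = ∑ ∂ r`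
satisfies `D ∘ D = 0`, its range is the orthogonal direct sum of the `∂ r (E r)`, its
kernel is the orthogonal direct sum of its range and `E_k`, and `ker D / range D ≃ E_k`. -/
theorem spectral_sequence_single_complex {E : Type*} [NormedAddCommGroup E]
    [InnerProductSpace ℝ E] [FiniteDimensional ℝ E] (k : ℕ)
    (Esub : Fin (k + 1) → Submodule ℝ E) (htop : Esub 0 = ⊤) (hchain : Antitone Esub)
    (del : Fin k → (E →ₗ[ℝ] E))
    (hmap : ∀ r : Fin k, Submodule.map (del r) (Esub r.castSucc) ≤ Esub r.castSucc)
    (hvanish : ∀ r : Fin k, ∀ x ∈ (Esub r.castSucc)ᗮ, del r x = 0)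
    (hsq : ∀ r : Fin k, (del r) ∘ₗ (del r) = 0)
    (hnext : ∀ r : Fin k, Esub r.succ =
      (LinearMap.ker (del r) ⊓ Esub r.castSucc) ⊓
        (Submodule.map (del r) (Esub r.castSucc))ᗮ) :
    ∀ D : E →ₗ[ℝ] E, D = ∑ r : Fin k, del r →
    (D ∘ₗ D = 0) ∧
    (LinearMap.range D = ⨆ r : Fin k, Submodule.map (del r) (Esub r.castSucc)) ∧
    (∀ r s : Fin k, r ≠ s → ∀ x ∈ Submodule.map (del r) (Esub r.castSucc),
      ∀ y ∈ Submodule.map (del s) (Esub s.castSucc), ⟪x, y⟫ = 0) ∧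
    (LinearMap.ker D = LinearMap.range D ⊔ Esub (Fin.last k)) ∧
    (∀ x ∈ LinearMap.range D, ∀ y ∈ Esub (Fin.last k), ⟪x, y⟫ = 0) ∧
    Nonempty ((↥(LinearMap.ker D) ⧸
        Submodule.comap (LinearMap.ker D).subtype (LinearMap.range D)) ≃ₗ[ℝ]
      ↥(Esub (Fin.last k))) := by
  rintro D rfl
  have hrange := range_sum_eq_iSup_range hchain hvanish hnext
  simp only [map_Esub_eq_range hvanish]
  have hsq_sum := sum_comp_sum_eq_zero hchain hmap hvanish hsq hnext
  have hortho : range (∑ r, del r) ⟂ Esub (Fin.last k) := by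
    rw [hrange, isOrtho_iSup_left]
    exact fun r => IsOrtho.symm <|
      (hchain (Fin.le_last r.succ)).trans (Esub_succ_isOrtho_range hvanish hnext r)
  have hker : ker (∑ r, del r) = range (∑ r, del r) ⊔ Esub (Fin.last k) :=
    le_antisymm (ker_sum_le_range_sup_Esub htop hchain hmap hvanish hsq hnext _)
      (sup_le (range_le_ker_iff.2 hsq_sum) (Esub_last_le_ker_sum hchain hmap hvanish hnext))
  exact ⟨hsq_sum, hrange, fun r s hrs => isOrtho_iff_inner_eq.1
    (pairwise_isOrtho_range hchain hmap hvanish hnext hrs), hker,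
    isOrtho_iff_inner_eq.1 hortho, ⟨quotientComapEquivOfEqSup hker.symm hortho.disjoint⟩⟩
end

section
/- Let S be a finite set, let A : S → ℝ and μ̂ : S → ℝ be functions with A(x) > 0 for every x ∈ S, and let n ≥ 2 be an integer. Suppose that for each j ∈ ℕ we are given an element x_j ∈ S and a positive integer k_j, and set d_j := n + 1 + 2j; assume: (monotonicity) k_j·A(x_j) ≤ k_{j+1}·A(x_{j+1}) for all j, and (index localization) |k_j·μ̂(x_j) − d_j| ≤ n − 1 for all j. Call an element x ∈ S reoccurring if x_j = x for infinitely many j. Then every reoccurring x satisfies μ̂(x) > 0, and any two reoccurring elements x and y satisfy A(x)·μ̂(y) = A(y)·μ̂(x), i.e. the ratios A(x)/μ̂(x) and A(y)/μ̂(y) coincide. -/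
/-!
The index bounds pin `k j * μ (x j)` to `[2 j + 2, 2 j + 2 n]`, so `μ > 0` at every element
that occurs at all; as `S` is finite, from some index on every `x j` is reoccurring. Writing
`k j * A (x j)` as `k j * μ (x j)` times the ratio `g j := A (x j) / μ (x j)`, monotonicity of
the actions becomes `(j + 1) * g j ≤ (j + 1 + n) * g (j + 1)`. Since `g` takes only finitely
many values, a drop `g (j + 1) < g j` is bounded below, while this inequality forces it to be
`O(1 / j)`; so `g` is eventually non-decreasing, and a non-decreasing sequence visiting two
values infinitely often visits only one.
-/

open Filter

theorem eventually_setOf_apply_eq_infinite {S : Type*} [Finite S] (f : ℕ → S) :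
    ∀ᶠ j in atTop, {i | f i = f j}.Infinite := by
  have hfiber : ∀ s, ∀ᶠ j in atTop, {i | f i = s}.Infinite ∨ f j ≠ s := by
    intro s
    by_cases hs : {i | f i = s}.Infinite
    · exact Eventually.of_forall fun _ => Or.inl hs
    · rw [← Nat.cofinite_eq_atTop]
      exact (Set.not_infinite.mp hs).eventually_cofinite_notMem.mono fun _ h => Or.inr h
  filter_upwards [eventually_all.mpr hfiber] with j hj
  exact (hj (f j)).resolve_right (not_not_intro rfl)

theorem eventually_le_succ_of_finite_range {g : ℕ → ℝ} (hg : (Set.range g).Finite) (c : ℝ)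
    (h : ∀ᶠ j : ℕ in atTop, ((j : ℝ) + 1) * g j ≤ (j + 1 + c) * g (j + 1)) :
    ∀ᶠ j in atTop, g j ≤ g (j + 1) := by
  have hdrop : ∀ p ∈ Set.range g ×ˢ Set.range g,
      ∀ᶠ j : ℕ in atTop, p.2 < p.1 → c * p.2 < ((j : ℝ) + 1) * (p.1 - p.2) := by
    rintro ⟨a, b⟩ -
    by_cases hba : b < a
    · have hlim : Tendsto (fun j : ℕ => ((j : ℝ) + 1) * (a - b)) atTop atTop :=
        ((tendsto_atTop_add_const_right _ 1 tendsto_natCast_atTop_atTop).atTop_mul_const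
          (sub_pos.mpr hba))
      exact (hlim.eventually_gt_atTop (c * b)).mono fun _ h _ => h
    · exact Eventually.of_forall fun _ h => absurd h hba
  filter_upwards [h, (eventually_all_finite (hg.prod hg)).mpr hdrop] with j hj hdrops
  by_contra! hlt
  have := hdrops (g j, g (j + 1)) ⟨⟨j, rfl⟩, ⟨j + 1, rfl⟩⟩ hlt
  linarith

theorem eq_of_frequently_eq_of_eventually_le_succ {α : Type*} [PartialOrder α] {g : ℕ → α}
    (hg : ∀ᶠ j in atTop, g j ≤ g (j + 1)) {a b : α}
    (ha : ∃ᶠ j in atTop, g j = a) (hb : ∃ᶠ j in atTop, g j = b) : a = b := by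
  obtain ⟨N, hN⟩ := eventually_atTop.mp hg
  have hmono : MonotoneOn g {j | N ≤ j} := monotoneOn_nat_Ici_of_le_succ hN
  obtain ⟨i, hNi, rfl⟩ := frequently_atTop.mp ha N
  obtain ⟨j, hij, rfl⟩ := frequently_atTop.mp hb i
  obtain ⟨l, hjl, hl⟩ := frequently_atTop.mp ha j
  have hNj : N ≤ j := hNi.trans hij
  exact le_antisymm (hmono hNi hNj hij) (hl ▸ hmono hNj (hNj.trans hjl) hjl)

theorem mul_div_le_add_mul_div_of_mul_le_mul {a a' m m' K K' t c : ℝ}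
    (ha : 0 ≤ a) (ha' : 0 ≤ a') (hm : 0 < m) (hm' : 0 < m') (hact : K * a ≤ K' * a')
    (hlo : t ≤ K * m) (hhi : K' * m' ≤ t + c) :
    t * (a / m) ≤ (t + c) * (a' / m') :=
  calc t * (a / m) ≤ K * m * (a / m) := by gcongr
    _ = K * a := by field_simp
    _ ≤ K' * a' := hact
    _ = K' * m' * (a' / m') := by field_simp
    _ ≤ (t + c) * (a' / m') := by gcongr

theorem resonance_relations_general {S : Type*} [Fintype S] (A μ : S → ℝ)
    (hA : ∀ x : S, 0 < A x) (n : ℕ)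
    (x : ℕ → S) (k : ℕ → ℕ)
    (hmono : ∀ j, (k j : ℝ) * A (x j) ≤ (k (j + 1) : ℝ) * A (x (j + 1)))
    (hidx : ∀ j, |(k j : ℝ) * μ (x j) - ((n : ℝ) + 1 + 2 * (j : ℝ))| ≤ (n : ℝ) - 1) :
    (∀ y : S, {j : ℕ | x j = y}.Infinite → 0 < μ y) ∧
    (∀ y z : S, {j : ℕ | x j = y}.Infinite → {j : ℕ | x j = z}.Infinite →
      A y * μ z = A z * μ y) := by
  have hbounds (j : ℕ) :
      2 * (j : ℝ) + 2 ≤ k j * μ (x j) ∧ (k j : ℝ) * μ (x j) ≤ 2 * (j : ℝ) + 2 * n := by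
    constructor <;> linarith [abs_le.mp (hidx j)]
  have hpos (y : S) (hy : {j | x j = y}.Infinite) : 0 < μ y := by
    obtain ⟨j, rfl⟩ := hy.nonempty
    exact pos_of_mul_pos_right (by linarith [(hbounds j).1]) (Nat.cast_nonneg (k j))
  refine ⟨hpos, fun y z hy hz => ?_⟩
  set g : ℕ → ℝ := fun j => A (x j) / μ (x j)
  have hstep : ∀ᶠ j : ℕ in atTop, ((j : ℝ) + 1) * g j ≤ (j + 1 + n) * g (j + 1) := by
    filter_upwards [eventually_setOf_apply_eq_infinite x,
      (tendsto_add_atTop_nat 1).eventually (eventually_setOf_apply_eq_infinite x)] with j hj hj'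
    have hhi : (k (j + 1) : ℝ) * μ (x (j + 1)) ≤ (2 * (j : ℝ) + 2) + 2 * n := by
      linarith [(hbounds (j + 1)).2, (Nat.cast_succ j : ((j + 1 : ℕ) : ℝ) = j + 1)]
    have := mul_div_le_add_mul_div_of_mul_le_mul (hA _).le (hA _).le (hpos _ hj) (hpos _ hj')
      (hmono j) (hbounds j).1 hhi
    linarith
  have hrange : (Set.range g).Finite :=
    (Set.finite_range (A / μ)).subset (Set.range_comp_subset_range x (A / μ))
  have hratio : A y / μ y = A z / μ z :=
    eq_of_frequently_eq_of_eventually_le_succ (eventually_le_succ_of_finite_range hrange n hstep)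
      ((Nat.frequently_atTop_iff_infinite.mpr hy).mono fun j hj => by simp only [g, hj])
      ((Nat.frequently_atTop_iff_infinite.mpr hz).mono fun j hj => by simp only [g, hj])
  exact (div_eq_div_iff (hpos y hy).ne' (hpos z hz).ne').mp hratio

/-- Combinatorial core of the resonance relations: if a sequence of carried orbits
`x j` with iterations `k j` has non-decreasing total actions `k j · A (x j)` and mean
indices `k j · μ (x j)` within `n − 1` of `d j = n + 1 + 2 j`, then every reoccurring
element `y` has `μ y > 0`, and any two reoccurring elements `y, z` satisfy
`A y · μ z = A z · μ y`, i.e. `A y / μ y = A z / μ z`. -/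
theorem resonance_relations {S : Type*} [Fintype S] (A μ : S → ℝ)
    (hA : ∀ x : S, 0 < A x) (n : ℕ) (hn : 2 ≤ n)
    (x : ℕ → S) (k : ℕ → ℕ) (hk : ∀ j, 0 < k j)
    (hmono : ∀ j, (k j : ℝ) * A (x j) ≤ (k (j + 1) : ℝ) * A (x (j + 1)))
    (hidx : ∀ j, |(k j : ℝ) * μ (x j) - ((n : ℝ) + 1 + 2 * (j : ℝ))| ≤ (n : ℝ) - 1) :
    (∀ y : S, {j : ℕ | x j = y}.Infinite → 0 < μ y) ∧
    (∀ y z : S, {j : ℕ | x j = y}.Infinite → {j : ℕ | x j = z}.Infinite →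
      A y * μ z = A z * μ y) :=
  resonance_relations_general A μ hA n x k hmono hidx
end
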